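/- arXiv:2409.19885 — 3 statements merged into one kernel-verified Lean document; each statement's English description precedes it below -/
import Mathlib

section
/- Let $N\geq 1$, $\alpha\in(0,N)$, and $p,q>0$. There exist real numbers $\theta_1,\theta_2>1$ with $\frac{N-2}{2N}<\frac{1}{\theta_1 p}<\frac12$, $\frac{N-2}{2N}<\frac{1}{\theta_2 q}<\frac12$ and $\frac{1}{\theta_1}+\frac{1}{\theta_2}=\frac{N+\alpha}{N}$ if and only if $\frac{N-2}{2N}<\frac1p,\frac1q<\frac{N}{2\alpha}$ and $\frac{N-2}{2(N+\alpha)}<\frac{1}{p+q}<\frac{N}{2(N+\alpha)}$ (with the conventions that $\frac{N-2}{2N}=0$ when $N\leq 2$). -/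
/-!
With `x = 1/θ₁` and `y = 1/θ₂`, the conditions on `θ₁, θ₂` say that `x` and `y` lie in the open
intervals `(m p, min (p/2) 1)` and `(m q, min (q/2) 1)`, where `m = max ((N-2)/(2N)) 0`, and that
`x + y = s := (N+α)/N`. Two open intervals contain points summing to `s` exactly when both are
nonempty and `s` lies strictly between the sums of their endpoints. Expanding the minima turns this
into the stated inequalities; `s < 2` makes one of the four resulting upper bounds vacuous.
-/

open Set

theorem exists_mem_Ioo_add_mem_Ioo_eq_iff {α : Type*} [AddCommGroup α] [LinearOrder α]
    [IsOrderedAddMonoid α] [DenselyOrdered α] {a₁ b₁ a₂ b₂ s : α} :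
    (∃ x y, x ∈ Ioo a₁ b₁ ∧ y ∈ Ioo a₂ b₂ ∧ x + y = s) ↔
      a₁ < b₁ ∧ a₂ < b₂ ∧ a₁ + a₂ < s ∧ s < b₁ + b₂ := by
  constructor
  · rintro ⟨x, y, ⟨hax, hxb⟩, ⟨hay, hyb⟩, rfl⟩
    exact ⟨hax.trans hxb, hay.trans hyb, add_lt_add hax hay, add_lt_add hxb hyb⟩
  · rintro ⟨h₁, h₂, hlo, hhi⟩
    obtain ⟨x, hlx, hxu⟩ : ∃ x, max a₁ (s - b₂) < x ∧ x < min b₁ (s - a₂) :=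
      exists_between <| max_lt (lt_min h₁ (lt_sub_iff_add_lt.2 hlo))
        (lt_min (sub_lt_iff_lt_add.2 hhi) (sub_lt_sub_left h₂ s))
    rw [max_lt_iff] at hlx
    rw [lt_min_iff] at hxu
    exact ⟨x, s - x, ⟨hlx.1, hxu.1⟩, ⟨lt_sub_comm.1 hxu.2, sub_lt_comm.1 hlx.2⟩,
      add_sub_cancel x s⟩

theorem one_lt_and_one_div_mul_mem_iff {m p θ : ℝ} (hm : 0 ≤ m) (hp : 0 < p) :
    1 < θ ∧ m < 1 / (θ * p) ∧ 1 / (θ * p) < 1 / 2 ↔ 1 / θ ∈ Ioo (m * p) (min (p / 2) 1) := by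
  rw [← div_div, mem_Ioo, lt_min_iff, lt_div_iff₀ hp, div_lt_iff₀ hp]
  constructor
  · rintro ⟨h1, hlo, hhi⟩
    exact ⟨hlo, by linarith, (div_lt_one (by linarith)).2 h1⟩
  · rintro ⟨hlo, hhi, h1⟩
    have hθ : 0 < θ := one_div_pos.1 ((mul_nonneg hm hp.le).trans_lt hlo)
    exact ⟨(div_lt_one hθ).1 h1, hlo, by linarith⟩

theorem exists_exponents_iff_exists_mem_Ioo {m p q s : ℝ} (hm : 0 ≤ m) (hp : 0 < p)
    (hq : 0 < q) :
    (∃ θ₁ θ₂ : ℝ, 1 < θ₁ ∧ 1 < θ₂ ∧ m < 1 / (θ₁ * p) ∧ 1 / (θ₁ * p) < 1 / 2 ∧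
      m < 1 / (θ₂ * q) ∧ 1 / (θ₂ * q) < 1 / 2 ∧ 1 / θ₁ + 1 / θ₂ = s) ↔
    ∃ x y, x ∈ Ioo (m * p) (min (p / 2) 1) ∧ y ∈ Ioo (m * q) (min (q / 2) 1) ∧ x + y = s := by
  constructor
  · rintro ⟨θ₁, θ₂, h₁, h₂, hp₁, hp₂, hq₁, hq₂, hs⟩
    exact ⟨1 / θ₁, 1 / θ₂, (one_lt_and_one_div_mul_mem_iff hm hp).1 ⟨h₁, hp₁, hp₂⟩,
      (one_lt_and_one_div_mul_mem_iff hm hq).1 ⟨h₂, hq₁, hq₂⟩, hs⟩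
  · rintro ⟨x, y, hx, hy, rfl⟩
    obtain ⟨h₁, hp₁, hp₂⟩ := (one_lt_and_one_div_mul_mem_iff (θ := 1 / x) hm hp).2
      (by rwa [one_div_one_div])
    obtain ⟨h₂, hq₁, hq₂⟩ := (one_lt_and_one_div_mul_mem_iff (θ := 1 / y) hm hq).2
      (by rwa [one_div_one_div])
    exact ⟨1 / x, 1 / y, h₁, h₂, hp₁, hp₂, hq₁, hq₂, by rw [one_div_one_div, one_div_one_div]⟩

theorem mul_lt_min_half_one_iff {m p : ℝ} (hm : m < 1 / 2) (hp : 0 < p) :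
    m * p < min (p / 2) 1 ↔ m < 1 / p := by
  rw [lt_min_iff, lt_div_iff₀ hp, and_iff_right (by nlinarith)]

theorem exists_exponents_iff {m p q s : ℝ} (hm₀ : 0 ≤ m) (hm : m < 1 / 2) (hs : s < 2)
    (hp : 0 < p) (hq : 0 < q) :
    (∃ θ₁ θ₂ : ℝ, 1 < θ₁ ∧ 1 < θ₂ ∧ m < 1 / (θ₁ * p) ∧ 1 / (θ₁ * p) < 1 / 2 ∧
      m < 1 / (θ₂ * q) ∧ 1 / (θ₂ * q) < 1 / 2 ∧ 1 / θ₁ + 1 / θ₂ = s) ↔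
    m < 1 / p ∧ s < 1 + p / 2 ∧ m < 1 / q ∧ s < 1 + q / 2 ∧ m * (p + q) < s ∧
      s < (p + q) / 2 := by
  rw [exists_exponents_iff_exists_mem_Ioo hm₀ hp hq, exists_mem_Ioo_add_mem_Ioo_eq_iff,
    mul_lt_min_half_one_iff hm hp, mul_lt_min_half_one_iff hm hq, ← mul_add,
    min_add, add_min, add_min, lt_min_iff, lt_min_iff, lt_min_iff, add_comm (p / 2) 1, ← add_div,
    one_add_one_eq_two]
  tauto

theorem one_div_lt_div_two_mul_iff {n α p : ℝ} (hn : 0 < n) (hα : 0 < α) (hp : 0 < p) :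
    1 / p < n / (2 * α) ↔ (n + α) / n < 1 + p / 2 := by
  rw [div_lt_div_iff₀ hp (by positivity), div_lt_iff₀ hn]
  constructor <;> intro <;> linarith

theorem max_div_lt_one_div_iff {n α r : ℝ} (hn : 0 < n) (hα : 0 < α) (hr : 0 < r) :
    max ((n - 2) / (2 * (n + α))) 0 < 1 / r ↔ max ((n - 2) / (2 * n)) 0 * r < (n + α) / n := by
  have hs : 0 < (n + α) / n := by positivity
  have : max ((n - 2) / (2 * (n + α))) 0 = max ((n - 2) / (2 * n)) 0 / ((n + α) / n) := by
    rw [← max_div_div_right hs.le, zero_div]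
    field_simp
  rw [this, div_lt_div_iff₀ hs hr, one_mul]

theorem one_div_lt_div_two_mul_add_iff {n α r : ℝ} (hn : 0 < n) (hα : 0 < α) (hr : 0 < r) :
    1 / r < n / (2 * (n + α)) ↔ (n + α) / n < r / 2 := by
  rw [div_lt_div_iff₀ hr (by positivity), div_lt_div_iff₀ hn two_pos]
  constructor <;> intro <;> linarith

theorem stmt_0_general (N : ℕ) (α p q : ℝ) (h0 : 0 < α) (hα : α < N)
    (hp : 0 < p) (hq : 0 < q) :
    (∃ θ1 θ2 : ℝ, 1 < θ1 ∧ 1 < θ2 ∧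
      max (((N : ℝ) - 2) / (2 * N)) 0 < 1 / (θ1 * p) ∧ 1 / (θ1 * p) < 1 / 2 ∧
      max (((N : ℝ) - 2) / (2 * N)) 0 < 1 / (θ2 * q) ∧ 1 / (θ2 * q) < 1 / 2 ∧
      1 / θ1 + 1 / θ2 = ((N : ℝ) + α) / N) ↔
    (max (((N : ℝ) - 2) / (2 * N)) 0 < 1 / p ∧ 1 / p < (N : ℝ) / (2 * α) ∧
     max (((N : ℝ) - 2) / (2 * N)) 0 < 1 / q ∧ 1 / q < (N : ℝ) / (2 * α) ∧
     max (((N : ℝ) - 2) / (2 * ((N : ℝ) + α))) 0 < 1 / (p + q) ∧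
     1 / (p + q) < (N : ℝ) / (2 * ((N : ℝ) + α))) := by
  have hN : (0 : ℝ) < N := h0.trans hα
  have hm : max (((N : ℝ) - 2) / (2 * N)) 0 < 1 / 2 :=
    max_lt (by rw [div_lt_iff₀ (by positivity)]; linarith) one_half_pos
  have hs : ((N : ℝ) + α) / N < 2 := by rw [div_lt_iff₀ hN]; linarith
  rw [exists_exponents_iff (le_max_right _ _) hm hs hp hq,
    one_div_lt_div_two_mul_iff hN h0 hp, one_div_lt_div_two_mul_iff hN h0 hq,
    max_div_lt_one_div_iff hN h0 (add_pos hp hq),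
    one_div_lt_div_two_mul_add_iff hN h0 (add_pos hp hq)]

/-- Existence of Hölder/HLS auxiliary exponents `θ1, θ2` is equivalent to the
arithmetic condition (H2) on `p, q`.  The convention `(N-2)/(2N) = 0` for `N ≤ 2`
is implemented via `max _ 0`. -/
theorem stmt_0 (N : ℕ) (hN : 1 ≤ N) (α p q : ℝ) (h0 : 0 < α) (hα : α < N)
    (hp : 0 < p) (hq : 0 < q) :
    (∃ θ1 θ2 : ℝ, 1 < θ1 ∧ 1 < θ2 ∧
      max (((N : ℝ) - 2) / (2 * N)) 0 < 1 / (θ1 * p) ∧ 1 / (θ1 * p) < 1 / 2 ∧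
      max (((N : ℝ) - 2) / (2 * N)) 0 < 1 / (θ2 * q) ∧ 1 / (θ2 * q) < 1 / 2 ∧
      1 / θ1 + 1 / θ2 = ((N : ℝ) + α) / N) ↔
    (max (((N : ℝ) - 2) / (2 * N)) 0 < 1 / p ∧ 1 / p < (N : ℝ) / (2 * α) ∧
     max (((N : ℝ) - 2) / (2 * N)) 0 < 1 / q ∧ 1 / q < (N : ℝ) / (2 * α) ∧
     max (((N : ℝ) - 2) / (2 * ((N : ℝ) + α))) 0 < 1 / (p + q) ∧
     1 / (p + q) < (N : ℝ) / (2 * ((N : ℝ) + α))) :=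
  stmt_0_general N α p q h0 hα hp hq
end

section
/- Let $H\subset\mathbb{R}^N$ be a closed half-space with reflection $\sigma_H$, and let $f,g:\mathbb{R}^N\to[0,\infty)$. For all $x,y\in H$ (so that $|x-y|\leq|x-\sigma_H(y)|$) and with $f^H,g^H$ the polarizations of $f,g$, the pointwise inequality holds: $\frac{f(x)g(y)+f(\sigma_H x)g(\sigma_H y)}{|x-y|^{N-\alpha}}+\frac{f(x)g(\sigma_H y)+f(\sigma_H x)g(y)}{|x-\sigma_H y|^{N-\alpha}}\leq\frac{f^H(x)g^H(y)+f^H(\sigma_H x)g^H(\sigma_H y)}{|x-y|^{N-\alpha}}+\frac{f^H(x)g^H(\sigma_H y)+f^H(\sigma_H x)g^H(y)}{|x-\sigma_H y|^{N-\alpha}}$, where $0<\alpha<N$ and $x\neq y$, $x\neq\sigma_H(y)$. -/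
/-- Reflection across the boundary hyperplane `{z : ⟪z, e⟫ = c}` of the closed
half-space `H = {z : ⟪z, e⟫ ≤ c}` (for a unit vector `e`). -/
noncomputable def halfSpaceRefl (N : ℕ) (e : EuclideanSpace ℝ (Fin N)) (c : ℝ)
    (z : EuclideanSpace ℝ (Fin N)) : EuclideanSpace ℝ (Fin N) :=
  z - (2 * ((inner ℝ z e : ℝ) - c)) • e

/-- Polarization of `u` with respect to the closed half-space
`H = {z : ⟪z, e⟫ ≤ c}`. -/
noncomputable def polarization (N : ℕ) (e : EuclideanSpace ℝ (Fin N)) (c : ℝ)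
    (u : EuclideanSpace ℝ (Fin N) → ℝ) (z : EuclideanSpace ℝ (Fin N)) : ℝ :=
  if (inner ℝ z e : ℝ) ≤ c then max (u z) (u (halfSpaceRefl N e c z))
  else min (u z) (u (halfSpaceRefl N e c z))

/-!
Two-point rearrangement: pairing the larger value of `f` with the larger value of `g`
increases `a c + b d`, while the total `(a + b)(c + d)` over both pairings is unchanged.
Since `|x - y| ≤ |x - σ y|` for `x, y ∈ H`, the pairing that gains sits on the larger
Riesz weight, so the weighted sum can only increase.
-/

theorem mul_add_mul_le_max_mul_max_add_min_mul_min (a b c d : ℝ) :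
    a * c + b * d ≤ max a b * max c d + min a b * min c d := by
  rcases le_total a b with hab | hab <;> rcases le_total c d with hcd | hcd <;>
    simp only [max_eq_left, max_eq_right, min_eq_left, min_eq_right, hab, hcd] <;>
    nlinarith [mul_nonneg (sub_nonneg.2 hab) (sub_nonneg.2 hcd)]

theorem weighted_max_min_rearrangement {w w' : ℝ} (hw : w' ≤ w) (a b c d : ℝ) :
    w * (a * c + b * d) + w' * (a * d + b * c) ≤
      w * (max a b * max c d + min a b * min c d) +
        w' * (max a b * min c d + min a b * max c d) := by
  have hsum : (max a b * max c d + min a b * min c d) +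
      (max a b * min c d + min a b * max c d) = (a * c + b * d) + (a * d + b * c) := by
    linear_combination (max a b + min a b) * (min_add_max c d) + (c + d) * (min_add_max a b)
  linear_combination mul_nonneg (sub_nonneg.2 hw)
    (sub_nonneg.2 (mul_add_mul_le_max_mul_max_add_min_mul_min a b c d)) - w' * hsum

section HalfSpace

variable {N : ℕ} {e : EuclideanSpace ℝ (Fin N)} {c : ℝ}

theorem inner_halfSpaceRefl (he : ‖e‖ = 1) (z : EuclideanSpace ℝ (Fin N)) :
    inner ℝ (halfSpaceRefl N e c z) e = 2 * c - inner ℝ z e := by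
  rw [halfSpaceRefl, inner_sub_left, real_inner_smul_left, real_inner_self_eq_norm_sq, he]
  ring

theorem halfSpaceRefl_halfSpaceRefl (he : ‖e‖ = 1) (z : EuclideanSpace ℝ (Fin N)) :
    halfSpaceRefl N e c (halfSpaceRefl N e c z) = z := by
  rw [halfSpaceRefl, inner_halfSpaceRefl he, halfSpaceRefl, sub_sub, ← add_smul]
  ring_nf
  rw [zero_smul, sub_zero]

theorem halfSpaceRefl_of_inner_eq {z : EuclideanSpace ℝ (Fin N)} (hz : inner ℝ z e = c) :
    halfSpaceRefl N e c z = z := by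
  rw [halfSpaceRefl, hz, sub_self, mul_zero, zero_smul, sub_zero]

theorem polarization_of_inner_le (u : EuclideanSpace ℝ (Fin N) → ℝ)
    {z : EuclideanSpace ℝ (Fin N)} (hz : inner ℝ z e ≤ c) :
    polarization N e c u z = max (u z) (u (halfSpaceRefl N e c z)) :=
  if_pos hz

theorem polarization_halfSpaceRefl_of_inner_le (he : ‖e‖ = 1)
    (u : EuclideanSpace ℝ (Fin N) → ℝ) {z : EuclideanSpace ℝ (Fin N)}
    (hz : inner ℝ z e ≤ c) :
    polarization N e c u (halfSpaceRefl N e c z) = min (u z) (u (halfSpaceRefl N e c z)) := by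
  rcases hz.lt_or_eq with hlt | heq
  · have hout : ¬ inner ℝ (halfSpaceRefl N e c z) e ≤ c := by
      rw [inner_halfSpaceRefl he]; linarith
    rw [polarization, if_neg hout, halfSpaceRefl_halfSpaceRefl he, min_comm]
  · rw [halfSpaceRefl_of_inner_eq heq, polarization_of_inner_le u hz,
      halfSpaceRefl_of_inner_eq heq, max_self, min_self]

theorem norm_sub_halfSpaceRefl_sq (he : ‖e‖ = 1) (x y : EuclideanSpace ℝ (Fin N)) :
    ‖x - halfSpaceRefl N e c y‖ ^ 2 =
      ‖x - y‖ ^ 2 + 4 * (inner ℝ x e - c) * (inner ℝ y e - c) := by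
  have hdecomp : x - halfSpaceRefl N e c y = (x - y) + (2 * (inner ℝ y e - c)) • e := by
    rw [halfSpaceRefl]; abel
  rw [hdecomp, norm_add_sq_real, real_inner_smul_right, inner_sub_left, norm_smul,
    Real.norm_eq_abs, he, mul_one, sq_abs]
  ring

theorem norm_sub_le_norm_sub_halfSpaceRefl (he : ‖e‖ = 1) {x y : EuclideanSpace ℝ (Fin N)}
    (hx : inner ℝ x e ≤ c) (hy : inner ℝ y e ≤ c) :
    ‖x - y‖ ≤ ‖x - halfSpaceRefl N e c y‖ := by
  refine (pow_le_pow_iff_left₀ (norm_nonneg _) (norm_nonneg _) two_ne_zero).1 ?_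
  rw [norm_sub_halfSpaceRefl_sq he]
  nlinarith [mul_nonneg (sub_nonneg.2 hx) (sub_nonneg.2 hy)]

end HalfSpace

theorem stmt_10_general (N : ℕ) (α : ℝ) (hα : α < N)
    (e : EuclideanSpace ℝ (Fin N)) (c : ℝ) (he : ‖e‖ = 1)
    (f g : EuclideanSpace ℝ (Fin N) → ℝ)
    (x y : EuclideanSpace ℝ (Fin N))
    (hx : (inner ℝ x e : ℝ) ≤ c) (hy : (inner ℝ y e : ℝ) ≤ c)
    (hxy : x ≠ y) :
    (f x * g y + f (halfSpaceRefl N e c x) * g (halfSpaceRefl N e c y)) /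
        ‖x - y‖ ^ ((N : ℝ) - α) +
      (f x * g (halfSpaceRefl N e c y) + f (halfSpaceRefl N e c x) * g y) /
        ‖x - halfSpaceRefl N e c y‖ ^ ((N : ℝ) - α) ≤
    (polarization N e c f x * polarization N e c g y +
        polarization N e c f (halfSpaceRefl N e c x) *
          polarization N e c g (halfSpaceRefl N e c y)) /
        ‖x - y‖ ^ ((N : ℝ) - α) +
      (polarization N e c f x *
          polarization N e c g (halfSpaceRefl N e c y) +
        polarization N e c f (halfSpaceRefl N e c x) * polarization N e c g y) /
        ‖x - halfSpaceRefl N e c y‖ ^ ((N : ℝ) - α) := by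
  have hnear : 0 < ‖x - y‖ ^ ((N : ℝ) - α) :=
    Real.rpow_pos_of_pos (norm_pos_iff.2 (sub_ne_zero.2 hxy)) _
  have hweights : (‖x - halfSpaceRefl N e c y‖ ^ ((N : ℝ) - α))⁻¹ ≤
      (‖x - y‖ ^ ((N : ℝ) - α))⁻¹ :=
    inv_anti₀ hnear (Real.rpow_le_rpow (norm_nonneg _)
      (norm_sub_le_norm_sub_halfSpaceRefl he hx hy) (sub_nonneg.2 hα.le))
  rw [polarization_of_inner_le f hx, polarization_of_inner_le g hy,
    polarization_halfSpaceRefl_of_inner_le he f hx, polarization_halfSpaceRefl_of_inner_le he g hy]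
  simp only [div_eq_inv_mul]
  exact weighted_max_min_rearrangement hweights _ _ _ _

/-- The pointwise polarization inequality for the Riesz kernel: for `x, y` in
the closed half-space `H`, with `σ = σ_H` the reflection and `f^H, g^H` the
polarizations of the nonnegative functions `f, g`. -/
theorem stmt_10 (N : ℕ) (hN : 1 ≤ N) (α : ℝ) (h0 : 0 < α) (hα : α < N)
    (e : EuclideanSpace ℝ (Fin N)) (c : ℝ) (he : ‖e‖ = 1)
    (f g : EuclideanSpace ℝ (Fin N) → ℝ)
    (hf : ∀ z, 0 ≤ f z) (hg : ∀ z, 0 ≤ g z)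
    (x y : EuclideanSpace ℝ (Fin N))
    (hx : (inner ℝ x e : ℝ) ≤ c) (hy : (inner ℝ y e : ℝ) ≤ c)
    (hxy : x ≠ y) (hxσy : x ≠ halfSpaceRefl N e c y) :
    (f x * g y + f (halfSpaceRefl N e c x) * g (halfSpaceRefl N e c y)) /
        ‖x - y‖ ^ ((N : ℝ) - α) +
      (f x * g (halfSpaceRefl N e c y) + f (halfSpaceRefl N e c x) * g y) /
        ‖x - halfSpaceRefl N e c y‖ ^ ((N : ℝ) - α) ≤
    (polarization N e c f x * polarization N e c g y +
        polarization N e c f (halfSpaceRefl N e c x) *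
          polarization N e c g (halfSpaceRefl N e c y)) /
        ‖x - y‖ ^ ((N : ℝ) - α) +
      (polarization N e c f x *
          polarization N e c g (halfSpaceRefl N e c y) +
        polarization N e c f (halfSpaceRefl N e c x) * polarization N e c g y) /
        ‖x - halfSpaceRefl N e c y‖ ^ ((N : ℝ) - α) :=
  stmt_10_general N α hα e c he f g x y hx hy hxy
end

section
/- (Pohozaev identity consequence / non-existence) Let $N\geq1$, $\alpha\in(0,N)$, $p,q>1$. Suppose $(u,v)$ is a weak solution of the Hartree system $-\Delta u+u=\frac{2p}{p+q}(I_\alpha*|v|^q)|u|^{p-2}u$, $-\Delta v+v=\frac{2q}{p+q}(I_\alpha*|u|^p)|v|^{q-2}v$ with the regularity $u\in H^1\cap W^{2,2}_{loc}\cap W^{1,\theta_1 p}$, $v\in H^1\cap W^{2,2}_{loc}\cap W^{1,\theta_2 q}$ for some $\theta_1,\theta_2>1$ with $\frac{1}{\theta_1}+\frac{1}{\theta_2}=\frac{N+\alpha}{N}$, and suppose the Pohozaev identity $\frac{N-2}{2}\int(|\nabla u|^2+|\nabla v|^2)+\frac{N}{2}\int(u^2+v^2)=\frac{2(N+\alpha)}{p+q}\int(I_\alpha*|u|^p)|v|^q$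 holds together with the Nehari identity $\int(|\nabla u|^2+u^2+|\nabla v|^2+v^2)=2\int(I_\alpha*|u|^p)|v|^q$. If $(p+q)N\leq2(N+\alpha)$ or $(p+q)(N-2)\geq2(N+\alpha)$, then $u=0$ and $v=0$ a.e. -/
open MeasureTheory

/-!
Eliminating the nonlocal energy `T` between the Pohozaev and Nehari identities leaves a linear
relation between `∫ |∇u|² + |∇v|²` and `∫ u² + v²` whose coefficients differ by a positive
constant; under either hypothesis on `p + q` this forces one of the two integrals to vanish. If
the mass vanishes we are done. If the Dirichlet energy vanishes, `u` and `v` have a.e. vanishing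
derivative; by Fubini this still holds a.e. along almost every line, so they are constant, and a
constant in `L²(ℝᴺ)` is zero.
-/

theorem eq_of_ae_deriv_eq_zero {F : Type*} [NormedAddCommGroup F] [NormedSpace ℝ F]
    [CompleteSpace F] {g : ℝ → F} (hg : Differentiable ℝ g) (h : ∀ᵐ t, deriv g t = 0)
    (a b : ℝ) : g b = g a := by
  have hint : IntervalIntegrable (deriv g) volume a b :=
    (intervalIntegrable_const (c := (0 : F))).congr_ae
      (ae_restrict_of_ae (h.mono fun t ht => ht.symm))
  have hzero : ∫ t in a..b, deriv g t = 0 := by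
    rw [intervalIntegral.integral_congr_ae (h.mono fun t ht _ => ht)]
    simp
  rw [← sub_eq_zero, ← hzero,
    intervalIntegral.integral_eq_sub_of_hasDerivAt (fun t _ => (hg t).hasDerivAt) hint]

section Lines

variable {E : Type*} [NormedAddCommGroup E] [NormedSpace ℝ E] [MeasurableSpace E]
  [BorelSpace E] [SecondCountableTopology E] {μ : Measure E} [μ.IsAddRightInvariant] [SFinite μ]

theorem quasiMeasurePreserving_add_smul (d : E) :
    Measure.QuasiMeasurePreserving (fun z : E × ℝ => z.1 + z.2 • d) (μ.prod volume) μ := by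
  have hmeas : Measurable fun z : E × ℝ => z.1 + z.2 • d := by fun_prop
  refine ⟨hmeas, Measure.AbsolutelyContinuous.mk fun S hS hS0 => ?_⟩
  rw [Measure.map_apply hmeas hS, Measure.prod_apply_symm (hmeas hS)]
  have hline (t : ℝ) : μ {x | x + t • d ∈ S} = 0 :=
    (measure_preimage_add_right μ (t • d) S).trans hS0
  simp [Set.preimage, hline]

theorem ae_ae_add_smul {P : E → Prop} (h : ∀ᵐ x ∂μ, P x) (d : E) :
    ∀ᵐ x ∂μ, ∀ᵐ t : ℝ, P (x + t • d) :=
  Measure.ae_ae_of_ae_prod ((quasiMeasurePreserving_add_smul d).ae h)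

theorem is_const_of_ae_fderiv_eq_zero [μ.IsOpenPosMeasure] {F : Type*} [NormedAddCommGroup F]
    [NormedSpace ℝ F] [CompleteSpace F] {f : E → F} (hf : Differentiable ℝ f)
    (h : ∀ᵐ x ∂μ, fderiv ℝ f x = 0) (x y : E) : f x = f y := by
  have htranslate (d : E) : (fun x => f (x + d)) = f := by
    refine (Continuous.ae_eq_iff_eq μ (hf.continuous.comp (continuous_add_const d))
      hf.continuous).1 ?_
    filter_upwards [ae_ae_add_smul h d] with x hx
    have hderiv (t : ℝ) :
        deriv (fun t : ℝ => f (x + t • d)) t = fderiv ℝ f (x + t • d) d :=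
      ((hf _).hasFDerivAt.comp_hasDerivAt t
        (((hasDerivAt_id t).smul_const d).const_add x)).deriv.trans (by simp)
    have hline := eq_of_ae_deriv_eq_zero (g := fun t : ℝ => f (x + t • d)) (by fun_prop)
      (hx.mono fun t ht => by simp [hderiv, ht]) 0 1
    simpa using hline
  simpa using congrFun (htranslate (x - y)) y

end Lines

theorem eq_zero_of_memLp_of_ae_fderiv_eq_zero {E : Type*} [NormedAddCommGroup E]
    [NormedSpace ℝ E] [FiniteDimensional ℝ E] [Nontrivial E] [MeasurableSpace E] [BorelSpace E]
    {μ : Measure E} [μ.IsAddHaarMeasure] {F : Type*} [NormedAddCommGroup F] [NormedSpace ℝ F]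
    [CompleteSpace F] {f : E → F} {p : ENNReal} (hp0 : p ≠ 0) (hptop : p ≠ ⊤)
    (hf : Differentiable ℝ f) (hfp : MemLp f p μ) (h : ∀ᵐ x ∂μ, fderiv ℝ f x = 0) :
    f = 0 := by
  have hconst : f = fun _ => f 0 := funext fun x => is_const_of_ae_fderiv_eq_zero hf h x 0
  rw [hconst] at hfp ⊢
  have hzero := (memLp_const_iff hp0 hptop).1 hfp
  simp [measure_univ_of_isAddLeftInvariant μ] at hzero
  exact funext fun _ => hzero

theorem ae_eq_zero_of_integral_sq_add_sq_eq_zero {α : Type*} [MeasurableSpace α] {μ : Measure α}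
    {f g : α → ℝ} (hint : Integrable (fun x => f x ^ 2 + g x ^ 2) μ)
    (h : ∫ x, f x ^ 2 + g x ^ 2 ∂μ = 0) : f =ᵐ[μ] 0 ∧ g =ᵐ[μ] 0 := by
  have hae := (integral_eq_zero_iff_of_nonneg (fun x => by positivity) hint).1 h
  constructor <;> filter_upwards [hae] with x hx <;> simp only [Pi.zero_apply] at hx ⊢ <;>
    nlinarith [sq_nonneg (f x), sq_nonneg (g x)]

theorem eq_zero_or_eq_zero_of_pohozaev_nehari {n a s A B T : ℝ} (hs : 0 < s) (hA : 0 ≤ A)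
    (hB : 0 ≤ B) (hPoho : (n - 2) / 2 * A + n / 2 * B = 2 * (n + a) / s * T)
    (hNehari : A + B = 2 * T) (hcase : s * n ≤ 2 * (n + a) ∨ 2 * (n + a) ≤ s * (n - 2)) :
    A = 0 ∨ B = 0 := by
  have hkey : (s * (n - 2) - 2 * (n + a)) * A + (s * n - 2 * (n + a)) * B = 0 := by
    rw [show T = (A + B) / 2 by linarith] at hPoho
    field_simp at hPoho
    linarith
  -- The two coefficients differ by `2 * s > 0`.
  rcases hcase with hcase | hcase
  · left; nlinarith
  · right; nlinarith

theorem stmt_13_general (N : ℕ) (hN : 1 ≤ N) (α p q T : ℝ)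
    (hp : 1 < p) (hq : 1 < q)
    (u v : EuclideanSpace ℝ (Fin N) → ℝ)
    (hud : Differentiable ℝ u) (hvd : Differentiable ℝ v)
    (hu2 : MemLp u 2 volume) (hv2 : MemLp v 2 volume)
    (hgradInt : Integrable
      (fun x => ‖fderiv ℝ u x‖ ^ (2 : ℕ) + ‖fderiv ℝ v x‖ ^ (2 : ℕ)) volume)
    (hPoho : (((N : ℝ) - 2) / 2) *
        (∫ x, ‖fderiv ℝ u x‖ ^ (2 : ℕ) + ‖fderiv ℝ v x‖ ^ (2 : ℕ)) +
      ((N : ℝ) / 2) * (∫ x, (u x) ^ (2 : ℕ) + (v x) ^ (2 : ℕ)) =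
        (2 * ((N : ℝ) + α) / (p + q)) * T)
    (hNehari : (∫ x, ‖fderiv ℝ u x‖ ^ (2 : ℕ) + ‖fderiv ℝ v x‖ ^ (2 : ℕ)) +
        (∫ x, (u x) ^ (2 : ℕ) + (v x) ^ (2 : ℕ)) = 2 * T)
    (hcase : (p + q) * N ≤ 2 * ((N : ℝ) + α) ∨
      2 * ((N : ℝ) + α) ≤ (p + q) * ((N : ℝ) - 2)) :
    u =ᵐ[(volume : Measure (EuclideanSpace ℝ (Fin N)))] 0 ∧
    v =ᵐ[(volume : Measure (EuclideanSpace ℝ (Fin N)))] 0 := by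
  have : Nonempty (Fin N) := ⟨⟨0, hN⟩⟩
  rcases eq_zero_or_eq_zero_of_pohozaev_nehari (by linarith)
    (integral_nonneg fun _ => by positivity) (integral_nonneg fun _ => by positivity)
    hPoho hNehari hcase with hgrad | hmass
  · obtain ⟨hu, hv⟩ := ae_eq_zero_of_integral_sq_add_sq_eq_zero hgradInt hgrad
    have hzero {f : EuclideanSpace ℝ (Fin N) → ℝ} (hf : Differentiable ℝ f)
        (hf2 : MemLp f 2 volume) (hgrad : (fun x => ‖fderiv ℝ f x‖) =ᵐ[volume] 0) :
        f =ᵐ[volume] 0 :=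
      .of_eq (eq_zero_of_memLp_of_ae_fderiv_eq_zero two_ne_zero (by simp) hf hf2
        (hgrad.mono fun x hx => norm_eq_zero.1 hx))
    exact ⟨hzero hud hu2 hu, hzero hvd hv2 hv⟩
  · exact ae_eq_zero_of_integral_sq_add_sq_eq_zero (hu2.integrable_sq.add hv2.integrable_sq) hmass

/-- Non-existence via the Pohozaev identity: if `(u, v)` is a (regular enough)
weak solution of the Hartree system whose nonlocal energy is `T`, satisfying
the Pohozaev and Nehari identities, and `(p+q)N ≤ 2(N+α)` or
`(p+q)(N-2) ≥ 2(N+α)`, then `u = v = 0` a.e. -/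
theorem stmt_13 (N : ℕ) (hN : 1 ≤ N) (α p q θ1 θ2 T : ℝ)
    (h0 : 0 < α) (hα : α < N) (hp : 1 < p) (hq : 1 < q)
    (hθ1 : 1 < θ1) (hθ2 : 1 < θ2)
    (hsum : 1 / θ1 + 1 / θ2 = ((N : ℝ) + α) / N)
    (u v : EuclideanSpace ℝ (Fin N) → ℝ)
    (hud : Differentiable ℝ u) (hvd : Differentiable ℝ v)
    (hu2 : MemLp u 2 volume) (hv2 : MemLp v 2 volume)
    (hgradInt : Integrable
      (fun x => ‖fderiv ℝ u x‖ ^ (2 : ℕ) + ‖fderiv ℝ v x‖ ^ (2 : ℕ)) volume)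
    (hPoho : (((N : ℝ) - 2) / 2) *
        (∫ x, ‖fderiv ℝ u x‖ ^ (2 : ℕ) + ‖fderiv ℝ v x‖ ^ (2 : ℕ)) +
      ((N : ℝ) / 2) * (∫ x, (u x) ^ (2 : ℕ) + (v x) ^ (2 : ℕ)) =
        (2 * ((N : ℝ) + α) / (p + q)) * T)
    (hNehari : (∫ x, ‖fderiv ℝ u x‖ ^ (2 : ℕ) + ‖fderiv ℝ v x‖ ^ (2 : ℕ)) +
        (∫ x, (u x) ^ (2 : ℕ) + (v x) ^ (2 : ℕ)) = 2 * T)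
    (hcase : (p + q) * N ≤ 2 * ((N : ℝ) + α) ∨
      2 * ((N : ℝ) + α) ≤ (p + q) * ((N : ℝ) - 2)) :
    u =ᵐ[(volume : Measure (EuclideanSpace ℝ (Fin N)))] 0 ∧
    v =ᵐ[(volume : Measure (EuclideanSpace ℝ (Fin N)))] 0 :=
  stmt_13_general N hN α p q T hp hq u v hud hvd hu2 hv2 hgradInt hPoho hNehari hcase
end
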